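/- Let G be a prime graph on a finite vertex set and let α be a new vertex not in V(G). Then the number of prime graphs H on V(G) ∪ {α} whose induced subgraph on V(G) equals G is exactly 2^{|V(G)|} − 2|V(G)| − 2. -/

import Mathlib

/-- `M` is a module of `G`: every vertex outside `M` is adjacent to all of `M` or to none. -/
def IsModule {V : Type*} (G : SimpleGraph V) (M : Set V) : Prop :=
  ∀ v ∉ M, (∀ m ∈ M, G.Adj v m) ∨ (∀ m ∈ M, ¬ G.Adj v m)

/-- `G` is prime: at least 4 vertices and only trivial modules. -/
def IsPrimeGraph {V : Type*} (G : SimpleGraph V) : Prop :=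
  4 ≤ Nat.card V ∧ ∀ M : Set V, IsModule G M → M = Set.univ ∨ M.Subsingleton

/-! A one-vertex extension `H` of `G` is determined by the neighbourhood `S ⊆ V` of the new
vertex `α`. A module of `H` restricts to a module of `G`, so when `G` is prime the only candidates
for nontrivial modules of `H` are `V` and the pairs `{v, α}`; these are modules exactly when `S` is
`∅` or `V`, resp. `N(v)` or `N(v) ∪ {v}`. Primality of `G` also makes these `2|V| + 2` sets
pairwise distinct: twins `u, v` would form a module `{u, v}`, and an isolated or universal vertex
`v` would make `V \ {v}` a module. -/

open Set

section

variable {V W : Type*} {G : SimpleGraph V}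

theorem Set.eq_or_eq_insert_iff_forall_ne {α : Type*} {S T : Set α} {v : α} (hv : v ∉ T) :
    S = T ∨ S = insert v T ↔ ∀ a, a ≠ v → (a ∈ T ↔ a ∈ S) := by
  refine ⟨by rintro (rfl | rfl) a ha <;> simp [ha], fun h => ?_⟩
  by_cases hvS : v ∈ S
  · right
    ext a
    rcases eq_or_ne a v with rfl | ha
    · simp [hvS]
    · simp [ha, h a ha]
  · left
    ext a
    rcases eq_or_ne a v with rfl | ha
    · simp [hvS, hv]
    · simp [h a ha]

theorem Set.card_compl_range_of_injective {α : Type*} [Finite V] [Finite α] {f : α → Set V}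
    (hf : Function.Injective f) : Nat.card ↥(range f)ᶜ = 2 ^ Nat.card V - Nat.card α := by
  have := Fintype.ofFinite V
  rw [Nat.card_coe_set_eq, ncard_compl, ncard_range_of_injective hf,
    Nat.card_eq_fintype_card (α := Set V), Fintype.card_set, ← Nat.card_eq_fintype_card]

theorem IsModule.comap {H : SimpleGraph W} {M : Set W} (hM : IsModule H M) (f : V → W) :
    IsModule (H.comap f) (f ⁻¹' M) :=
  fun v hv => (hM (f v) hv).imp (fun h m hm => h (f m) hm) (fun h m hm => h (f m) hm)

theorem isModule_pair_iff {u v : V} :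
    IsModule G {u, v} ↔ ∀ w, w ≠ u → w ≠ v → (G.Adj w u ↔ G.Adj w v) := by
  simp only [IsModule, mem_insert_iff, mem_singleton_iff, not_or, forall_eq_or_imp, forall_eq,
    and_imp]
  exact forall_congr' fun w => forall_congr' fun _ => forall_congr' fun _ => by tauto

theorem isModule_compl_singleton {v : V} (h : G.IsUniversal v ∨ G.IsIsolated v) :
    IsModule G {v}ᶜ := by
  intro w hw
  rw [notMem_compl_iff, mem_singleton_iff] at hw
  subst hw
  exact h.imp (fun hv m hm => hv (Ne.symm hm)) (fun hv m _ => hv m)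

theorem IsPrimeGraph.not_isModule (hG : IsPrimeGraph G) {M : Set V} (h2 : 2 ≤ M.ncard)
    (hlt : M.ncard < Nat.card V) : ¬ IsModule G M := by
  intro hM
  rcases hG.2 M hM with rfl | hM1
  · rw [ncard_univ] at hlt
    exact hlt.false
  · have := (ncard_le_one hM1.finite).2 hM1
    omega

theorem IsPrimeGraph.eq_of_forall_adj_iff (hG : IsPrimeGraph G) {u v : V}
    (h : ∀ w, w ≠ u → w ≠ v → (G.Adj w u ↔ G.Adj w v)) : u = v := by
  by_contra huv
  refine hG.not_isModule ?_ ?_ (isModule_pair_iff.2 h) <;> rw [ncard_pair huv]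
  linarith [hG.1]

theorem IsPrimeGraph.not_isModule_compl_singleton [Finite V] (hG : IsPrimeGraph G) (v : V) :
    ¬ IsModule G {v}ᶜ := by
  have hcard : ({v}ᶜ : Set V).ncard = Nat.card V - 1 := by rw [ncard_compl, ncard_singleton]
  have := hG.1
  exact hG.not_isModule (by omega) (by omega)

theorem IsPrimeGraph.neighborSet_injective (hG : IsPrimeGraph G) :
    Function.Injective G.neighborSet := fun u v h =>
  hG.eq_of_forall_adj_iff fun w _ _ => by
    rw [G.adj_comm w u, G.adj_comm w v, ← SimpleGraph.mem_neighborSet, h,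
      SimpleGraph.mem_neighborSet]

theorem IsPrimeGraph.insert_neighborSet_injective (hG : IsPrimeGraph G) :
    Function.Injective fun v => insert v (G.neighborSet v) := fun u v h =>
  hG.eq_of_forall_adj_iff fun w hwu hwv => by
    simpa [hwu, hwv, G.adj_comm] using congrArg (w ∈ ·) h

theorem IsPrimeGraph.not_isUniversal [Finite V] (hG : IsPrimeGraph G) (v : V) :
    ¬ G.IsUniversal v := fun h =>
  hG.not_isModule_compl_singleton v (isModule_compl_singleton (.inl h))

theorem IsPrimeGraph.not_isIsolated [Finite V] (hG : IsPrimeGraph G) (v : V) :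
    ¬ G.IsIsolated v := fun h =>
  hG.not_isModule_compl_singleton v (isModule_compl_singleton (.inr h))

namespace SimpleGraph

theorem neighborSet_ne_insert_neighborSet (u v : V) :
    G.neighborSet u ≠ insert v (G.neighborSet v) := by
  intro h
  have hvu : v ∈ G.neighborSet u := by rw [h]; exact mem_insert v _
  have huu : u ∈ G.neighborSet u := by rw [h]; exact mem_insert_of_mem v hvu.symm
  exact G.irrefl huu

def addVertex (G : SimpleGraph V) (S : Set V) : SimpleGraph (V ⊕ Unit) where
  Adj
    | .inl a, .inl b => G.Adj a b
    | .inl a, .inr _ | .inr _, .inl a => a ∈ S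
    | .inr _, .inr _ => False
  symm := ⟨by rintro (a | a) (b | b) h <;> first | exact h | exact h.symm⟩
  loopless := ⟨by rintro (a | a) h <;> first | exact G.irrefl h | exact h⟩

theorem comap_inl_addVertex (S : Set V) : (G.addVertex S).comap Sum.inl = G := rfl

def addVertexEquiv (G : SimpleGraph V) :
    {H : SimpleGraph (V ⊕ Unit) // ∀ a b : V, H.Adj (.inl a) (.inl b) ↔ G.Adj a b} ≃
      Set V where
  toFun H := {v | H.1.Adj (.inl v) (.inr ())}
  invFun S := ⟨G.addVertex S, fun _ _ => Iff.rfl⟩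
  left_inv H := by
    ext (a | ⟨⟩) (b | ⟨⟩)
    · exact (H.2 a b).symm
    · rfl
    · exact H.1.adj_comm _ _
    · exact iff_of_false id H.1.irrefl
  right_inv _ := rfl

theorem isModule_addVertex_range_inl_iff {S : Set V} :
    IsModule (G.addVertex S) (range Sum.inl) ↔ S = univ ∨ S = ∅ := by
  simp [IsModule, Sum.forall, eq_univ_iff_forall, eq_empty_iff_forall_notMem, addVertex]

theorem isModule_addVertex_pair_iff {S : Set V} {v : V} :
    IsModule (G.addVertex S) {.inl v, .inr ()} ↔
      S = G.neighborSet v ∨ S = insert v (G.neighborSet v) := by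
  rw [isModule_pair_iff, Set.eq_or_eq_insert_iff_forall_ne (G.notMem_neighborSet_self)]
  simp [Sum.forall, addVertex, G.adj_comm]

end SimpleGraph

/-- The neighbourhoods of a new vertex `α` that make a nontrivial module: `(b, none)` gives
the module `V` and `(b, some v)` the module `{v, α}`, with `b` recording whether `α` is adjacent
to `v` (to all of `V` for `none`). -/
def forbiddenNeighborSet (G : SimpleGraph V) : Bool × Option V → Set V
  | (false, none) => ∅
  | (true, none) => univ
  | (false, some v) => G.neighborSet v
  | (true, some v) => insert v (G.neighborSet v)

theorem IsPrimeGraph.forbiddenNeighborSet_injective [Finite V] (hG : IsPrimeGraph G) :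
    Function.Injective (forbiddenNeighborSet G) := by
  have : Nonempty V := (Nat.card_pos_iff.1 (by linarith [hG.1])).1
  rintro ⟨_ | _, _ | u⟩ ⟨_ | _, _ | v⟩ h <;> simp only [forbiddenNeighborSet] at h <;>
    grind [hG.not_isIsolated, hG.not_isUniversal, hG.neighborSet_injective.eq_iff,
      hG.insert_neighborSet_injective.eq_iff,
      G.neighborSet_ne_insert_neighborSet, SimpleGraph.neighborSet_eq_empty,
      SimpleGraph.insert_neighborSet_eq_univ, SimpleGraph.neighborSet_ne_univ, empty_ne_univ,
      (insert_nonempty _ _).ne_empty]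

theorem IsPrimeGraph.isModule_addVertex_cases (hG : IsPrimeGraph G) {S : Set V}
    {M : Set (V ⊕ Unit)} (hM : IsModule (G.addVertex S) M) :
    M = univ ∨ M.Subsingleton ∨ M = range Sum.inl ∨ ∃ v, M = {.inl v, .inr ()} := by
  have hM' := hG.2 _ (G.comap_inl_addVertex S ▸ hM.comap Sum.inl)
  by_cases hα : Sum.inr () ∈ M
  · rcases hM' with huniv | hsub
    · left
      ext (a | ⟨⟩)
      · simpa using (huniv ▸ mem_univ a : a ∈ Sum.inl ⁻¹' M)
      · simpa using hα
    rcases (Sum.inl ⁻¹' M).eq_empty_or_nonempty with hempty | ⟨v, hv⟩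
    · refine .inr (.inl ((subsingleton_singleton (a := Sum.inr ())).anti ?_))
      rintro (a | ⟨⟩) ha
      · exact (hempty ▸ ha : a ∈ (∅ : Set V)).elim
      · rfl
    · refine .inr (.inr (.inr ⟨v, ?_⟩))
      ext (a | ⟨⟩)
      · simpa using ⟨fun ha => hsub ha hv, fun h => h ▸ hv⟩
      · simpa using hα
  · rcases hM' with huniv | hsub
    · refine .inr (.inr (.inl ?_))
      ext (a | ⟨⟩)
      · simpa using (huniv ▸ mem_univ a : a ∈ Sum.inl ⁻¹' M)
      · simpa using hα
    · refine .inr (.inl ((hsub.image Sum.inl).anti ?_))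
      rintro (a | ⟨⟩) ha
      · exact ⟨a, ha, rfl⟩
      · exact (hα ha).elim

theorem IsPrimeGraph.isPrimeGraph_addVertex_iff [Finite V] (hG : IsPrimeGraph G) (S : Set V) :
    IsPrimeGraph (G.addVertex S) ↔ S ∉ range (forbiddenNeighborSet G) := by
  have hforb : S ∈ range (forbiddenNeighborSet G) ↔ IsModule (G.addVertex S) (range Sum.inl) ∨
      ∃ v, IsModule (G.addVertex S) {.inl v, .inr ()} := by
    simp only [G.isModule_addVertex_range_inl_iff, G.isModule_addVertex_pair_iff, mem_range,
      Prod.exists, Bool.exists_bool, Option.exists, forbiddenNeighborSet]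
    grind
  have hcard : Nat.card (V ⊕ Unit) = Nat.card V + 1 := by
    rw [Nat.card_sum, Nat.card_unique (α := Unit)]
  have h4 := hG.1
  rw [hforb, not_or, not_exists]
  constructor
  · intro hH
    refine ⟨hH.not_isModule ?_ ?_, fun v => hH.not_isModule ?_ ?_⟩ <;>
      simp only [ncard_range_of_injective Sum.inl_injective, ncard_pair Sum.inl_ne_inr] <;> omega
  · rintro ⟨hinl, hpair⟩
    refine ⟨by omega, fun M hM => ?_⟩
    rcases hG.isModule_addVertex_cases hM with h | h | rfl | ⟨v, rfl⟩
    exacts [.inl h, .inr h, (hinl hM).elim, (hpair v hM).elim]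

end

theorem card_prime_one_extensions {V : Type*} [Finite V] (G : SimpleGraph V)
    (hG : IsPrimeGraph G) :
    Nat.card {H : SimpleGraph (V ⊕ Unit) //
        (∀ a b : V, H.Adj (Sum.inl a) (Sum.inl b) ↔ G.Adj a b) ∧ IsPrimeGraph H}
      = 2 ^ Nat.card V - 2 * Nat.card V - 2 := by
  have hcount :
      Nat.card ↥(range (forbiddenNeighborSet G))ᶜ = 2 ^ Nat.card V - 2 * Nat.card V - 2 := by
    rw [card_compl_range_of_injective hG.forbiddenNeighborSet_injective, Nat.card_prod,
      Finite.card_option, Nat.card_eq_fintype_card (α := Bool), Fintype.card_bool]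
    omega
  rw [← hcount]
  exact Nat.card_congr <| (Equiv.subtypeSubtypeEquivSubtypeInter _ _).symm.trans <|
    (G.addVertexEquiv.symm.subtypeEquiv fun S => (hG.isPrimeGraph_addVertex_iff S).symm).symm
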